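/- Let n ≥ 2, let ℝⁿ₊ = {x = (x', xₙ) ∈ ℝⁿ : xₙ > 0} be the open upper half-space, and let ψ : ℝⁿ₊ → ℝ be locally integrable. Define the even reflection Ψ : ℝⁿ → ℝ by Ψ(x', xₙ) = ψ(x', xₙ) if xₙ ≥ 0 and Ψ(x', xₙ) = ψ(x', −xₙ) if xₙ < 0. Then for every x ∈ ℝⁿ₊ and every R > 0 such that ψ is integrable on B(x,R) ∩ ℝⁿ₊, one has ⨍_{B(x,R)} |Ψ − (Ψ)_{B(x,R)}| ≤ 4 ⨍_{B(x,R) ∩ ℝⁿ₊} |ψ − (ψ)_{B(x,R) ∩ ℝⁿ₊}|, where ⨍_E g := (1/|E|) ∫_E g denotes the integral average over E with respect to Lebesgue measure and (g)_E := ⨍_E g. -/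

import Mathlib

/-!
The reflection `y ↦ (y', -yₙ)` is a linear isometry, hence preserves Lebesgue measure, and since
the centre of the ball lies in the upper half-space it maps the lower half of the ball into the
upper half `B⁺`. So `∫_B |Ψ - c| ≤ 2 ∫_{B⁺} |ψ - c|` for every constant `c`, and `|B⁺| ≤ |B|`
turns this into the same bound for averages. Taking `c = (ψ)_{B⁺}` and using that the mean
oscillation about the mean is at most twice the mean oscillation about any constant gives the
factor `4`.
-/

open MeasureTheory Metric Set

section Average

variable {α : Type*} [MeasurableSpace α] {μ : Measure α} {f : α → ℝ}

theorem integral_abs_sub_average_le [IsFiniteMeasure μ] (hf : Integrable f μ) (c : ℝ) :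
    ∫ x, |f x - ⨍ y, f y ∂μ| ∂μ ≤ 2 * ∫ x, |f x - c| ∂μ := by
  set m := ⨍ y, f y ∂μ
  have hfc : Integrable (fun x => |f x - c|) μ := (hf.sub (integrable_const c)).abs
  have hcm : μ.real univ * |c - m| ≤ ∫ x, |f x - c| ∂μ :=
    calc μ.real univ * |c - m| = |∫ x, (c - f x) ∂μ| := by
          rw [integral_sub (integrable_const c) hf, ← measure_smul_average μ f, integral_const,
            smul_eq_mul, smul_eq_mul, ← mul_sub, abs_mul, abs_of_nonneg measureReal_nonneg]
      _ ≤ ∫ x, |c - f x| ∂μ := abs_integral_le_integral_abs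
      _ = ∫ x, |f x - c| ∂μ := by simp_rw [abs_sub_comm]
  calc ∫ x, |f x - m| ∂μ ≤ ∫ x, (|f x - c| + |c - m|) ∂μ :=
        integral_mono (hf.sub (integrable_const m)).abs (hfc.add (integrable_const _))
          fun x => abs_sub_le _ _ _
    _ = ∫ x, |f x - c| ∂μ + μ.real univ * |c - m| := by
        rw [integral_add hfc (integrable_const _), integral_const, smul_eq_mul]
    _ ≤ 2 * ∫ x, |f x - c| ∂μ := by linarith

theorem average_abs_sub_average_le [IsFiniteMeasure μ] (hf : Integrable f μ) (c : ℝ) :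
    ⨍ x, |f x - ⨍ y, f y ∂μ| ∂μ ≤ 2 * ⨍ x, |f x - c| ∂μ := by
  calc ⨍ x, |f x - ⨍ y, f y ∂μ| ∂μ
      = (μ.real univ)⁻¹ * ∫ x, |f x - ⨍ y, f y ∂μ| ∂μ := average_eq μ _
    _ ≤ (μ.real univ)⁻¹ * (2 * ∫ x, |f x - c| ∂μ) := by
        gcongr; exact integral_abs_sub_average_le hf c
    _ = 2 * ⨍ x, |f x - c| ∂μ := by rw [average_eq, smul_eq_mul]; ring

theorem inv_measureReal_mul_setIntegral_le_setAverage {s t : Set α} (hst : s ⊆ t)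
    (ht : μ t ≠ ⊤) (hf : 0 ≤ᵐ[μ.restrict s] f) :
    (μ.real t)⁻¹ * ∫ x in s, f x ∂μ ≤ ⨍ x in s, f x ∂μ := by
  by_cases hs : μ s = 0
  · simp [Measure.restrict_eq_zero.mpr hs]
  rw [setAverage_eq, smul_eq_mul]
  have hs_pos : 0 < μ.real s :=
    ENNReal.toReal_pos hs (ne_top_of_le_ne_top ht (measure_mono hst))
  gcongr
  exact integral_nonneg_of_ae hf

end Average

section CoordReflection

variable {n : ℕ} (i : Fin n)

noncomputable def coordReflection :
    EuclideanSpace ℝ (Fin n) ≃ₗᵢ[ℝ] EuclideanSpace ℝ (Fin n) :=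
  (ℝ ∙ EuclideanSpace.single i (1 : ℝ))ᗮ.reflection

theorem coordReflection_apply (y : EuclideanSpace ℝ (Fin n)) :
    coordReflection i y = y - EuclideanSpace.single i (2 * y i) := by
  rw [coordReflection, Submodule.reflection_apply, Submodule.starProjection_orthogonal_val,
    Submodule.starProjection_singleton, EuclideanSpace.inner_single_left]
  ext j
  by_cases h : j = i <;> simp [h] <;> ring

theorem coordReflection_apply_apply (y : EuclideanSpace ℝ (Fin n)) (j : Fin n) :
    coordReflection i y j = if j = i then -y i else y j := by
  rw [coordReflection_apply]
  by_cases h : j = i <;> simp [h]; ring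

theorem coordReflection_apply_self (y : EuclideanSpace ℝ (Fin n)) :
    coordReflection i y i = -y i := by
  simp [coordReflection_apply_apply i]

theorem mapsTo_coordReflection_diff {s : Set (EuclideanSpace ℝ (Fin n))}
    (hrefl : ∀ y ∈ s, y i < 0 → coordReflection i y ∈ s) :
    MapsTo (coordReflection i) (s \ {y | 0 ≤ y i}) (s ∩ {y | 0 < y i}) := fun y hy =>
  have hyi : y i < 0 := not_le.mp hy.2
  ⟨hrefl y hy.1 hyi,
    show 0 < coordReflection i y i by rw [coordReflection_apply_self]; linarith⟩

theorem dist_coordReflection_le {x y : EuclideanSpace ℝ (Fin n)} (hx : 0 ≤ x i) (hy : y i ≤ 0) :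
    dist (coordReflection i y) x ≤ dist y x := by
  rw [EuclideanSpace.dist_eq, EuclideanSpace.dist_eq]
  gcongr with j
  rw [coordReflection_apply_apply]
  split_ifs with h
  · subst h
    rw [Real.dist_eq, Real.dist_eq, abs_of_nonpos (by linarith : y j - x j ≤ 0)]
    exact abs_le.mpr ⟨by linarith, by linarith⟩
  · rfl

theorem coordReflection_mem_ball {x y : EuclideanSpace ℝ (Fin n)} {R : ℝ} (hx : 0 ≤ x i)
    (hy : y ∈ ball x R) (hyi : y i < 0) : coordReflection i y ∈ ball x R :=
  (dist_coordReflection_le i hx hyi.le).trans_lt hy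

theorem volume_setOf_apply_eq_zero : volume {y : EuclideanSpace ℝ (Fin n) | y i = 0} = 0 := by
  have hker : {y : EuclideanSpace ℝ (Fin n) | y i = 0} =
      (LinearMap.ker (EuclideanSpace.projₗ (𝕜 := ℝ) i) : Set (EuclideanSpace ℝ (Fin n))) := by
    ext y; simp
  rw [hker]
  refine Measure.addHaar_submodule _ _ fun htop => ?_
  have h1 : EuclideanSpace.single i (1 : ℝ) ∈ LinearMap.ker (EuclideanSpace.projₗ i) := by
    rw [htop]; trivial
  simp at h1

theorem measurableSet_setOf_apply_nonneg :
    MeasurableSet {y : EuclideanSpace ℝ (Fin n) | 0 ≤ y i} :=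
  measurableSet_le measurable_const (by fun_prop)

theorem setOf_apply_nonneg_ae_eq :
    {y : EuclideanSpace ℝ (Fin n) | 0 ≤ y i} =ᵐ[volume] {y | 0 < y i} := by
  filter_upwards [measure_eq_zero_iff_ae_notMem.mp (volume_setOf_apply_eq_zero i)] with y hy
  simp only [eq_iff_iff] at hy ⊢
  exact ⟨fun h => h.lt_of_ne' hy, le_of_lt⟩

end CoordReflection

section EvenReflection

variable {n : ℕ} (i : Fin n)

noncomputable def evenReflection {β : Type*} (f : EuclideanSpace ℝ (Fin n) → β)
    (y : EuclideanSpace ℝ (Fin n)) : β :=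
  if 0 ≤ y i then f y else f (coordReflection i y)

theorem evenReflection_comp {β γ : Type*} (g : β → γ) (f : EuclideanSpace ℝ (Fin n) → β) :
    evenReflection i (fun y => g (f y)) = fun y => g (evenReflection i f y) :=
  funext fun _ => (apply_ite g _ _ _).symm

variable {i} {f : EuclideanSpace ℝ (Fin n) → ℝ} {s : Set (EuclideanSpace ℝ (Fin n))}

theorem integrableOn_evenReflection (hs : MeasurableSet s)
    (hrefl : ∀ y ∈ s, y i < 0 → coordReflection i y ∈ s)
    (hf : IntegrableOn f (s ∩ {y | 0 < y i})) :
    IntegrableOn (evenReflection i f) s := by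
  have hσ := (coordReflection i).measurePreserving
  have hemb := (coordReflection i).toHomeomorph.measurableEmbedding
  rw [← inter_union_sdiff s {y | 0 ≤ y i}]
  refine IntegrableOn.union ?_ ?_
  · refine IntegrableOn.congr_fun ?_ (fun y hy => (if_pos hy.2).symm)
      (hs.inter (measurableSet_setOf_apply_nonneg i))
    rwa [IntegrableOn, Measure.restrict_congr_set (ae_eq_set_inter (ae_eq_refl s)
      (setOf_apply_nonneg_ae_eq i))]
  · refine IntegrableOn.congr_fun ?_ (fun y hy => (if_neg hy.2).symm)
      (hs.diff (measurableSet_setOf_apply_nonneg i))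
    exact ((hσ.integrableOn_comp_preimage hemb).mpr hf).mono_set
      (mapsTo_coordReflection_diff i hrefl)

theorem setIntegral_evenReflection_le (hs : MeasurableSet s)
    (hrefl : ∀ y ∈ s, y i < 0 → coordReflection i y ∈ s)
    (hf : IntegrableOn f (s ∩ {y | 0 < y i})) (hf₀ : 0 ≤ f) :
    ∫ y in s, evenReflection i f y ≤ 2 * ∫ y in s ∩ {y | 0 < y i}, f y := by
  have hσ := (coordReflection i).measurePreserving
  have hemb := (coordReflection i).toHomeomorph.measurableEmbedding
  have hH := measurableSet_setOf_apply_nonneg i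
  have h_nonneg : ∫ y in s ∩ {y | 0 ≤ y i}, evenReflection i f y
      = ∫ y in s ∩ {y | 0 < y i}, f y :=
    (setIntegral_congr_fun (hs.inter hH) fun y hy => if_pos hy.2).trans
      (setIntegral_congr_set (ae_eq_set_inter (ae_eq_refl s) (setOf_apply_nonneg_ae_eq i)))
  have h_neg : ∫ y in s \ {y | 0 ≤ y i}, evenReflection i f y
      ≤ ∫ y in s ∩ {y | 0 < y i}, f y :=
    calc ∫ y in s \ {y | 0 ≤ y i}, evenReflection i f y
        = ∫ y in s \ {y | 0 ≤ y i}, f (coordReflection i y) :=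
          setIntegral_congr_fun (hs.diff hH) fun y hy => if_neg hy.2
      _ ≤ ∫ y in coordReflection i ⁻¹' (s ∩ {y | 0 < y i}), f (coordReflection i y) :=
          setIntegral_mono_set ((hσ.integrableOn_comp_preimage hemb).mpr hf)
            (ae_of_all _ fun y => hf₀ (coordReflection i y))
            (mapsTo_coordReflection_diff i hrefl).subset_preimage.eventuallyLE
      _ = ∫ y in s ∩ {y | 0 < y i}, f y := hσ.setIntegral_preimage_emb hemb f _
  rw [← integral_inter_add_sdiff hH (integrableOn_evenReflection hs hrefl hf)]
  linarith

theorem setAverage_evenReflection_le (hs : MeasurableSet s) (hs_fin : volume s ≠ ⊤)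
    (hrefl : ∀ y ∈ s, y i < 0 → coordReflection i y ∈ s)
    (hf : IntegrableOn f (s ∩ {y | 0 < y i})) (hf₀ : 0 ≤ f) :
    ⨍ y in s, evenReflection i f y ≤ 2 * ⨍ y in s ∩ {y | 0 < y i}, f y :=
  calc ⨍ y in s, evenReflection i f y
      = (volume.real s)⁻¹ * ∫ y in s, evenReflection i f y := by
        rw [setAverage_eq, smul_eq_mul]
    _ ≤ (volume.real s)⁻¹ * (2 * ∫ y in s ∩ {y | 0 < y i}, f y) := by
        gcongr; exact setIntegral_evenReflection_le hs hrefl hf hf₀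
    _ = 2 * ((volume.real s)⁻¹ * ∫ y in s ∩ {y | 0 < y i}, f y) := by ring
    _ ≤ 2 * ⨍ y in s ∩ {y | 0 < y i}, f y := by
        gcongr
        exact inv_measureReal_mul_setIntegral_le_setAverage inter_subset_left hs_fin
          (ae_of_all _ fun y => hf₀ y)

end EvenReflection

/-- Even reflection estimate: if `Ψ` is the even reflection of `ψ` across the hyperplane
`{xₙ = 0}`, then for any ball centered in the open upper half-space, the mean oscillation of
`Ψ` over the ball is controlled (with constant 4) by the mean oscillation of `ψ` over the
intersection of the ball with the upper half-space. -/
theorem reflection_extension_estimate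
    (n : ℕ) (hn : 2 ≤ n)
    (ψ Ψ : EuclideanSpace ℝ (Fin n) → ℝ)
    (hΨ : ∀ x : EuclideanSpace ℝ (Fin n),
      Ψ x = if 0 ≤ x ⟨n - 1, by omega⟩ then ψ x
            else ψ (x - EuclideanSpace.single ⟨n - 1, by omega⟩ (2 * x ⟨n - 1, by omega⟩)))
    (x : EuclideanSpace ℝ (Fin n)) (hx : 0 < x ⟨n - 1, by omega⟩)
    (R : ℝ)
    (hint : IntegrableOn ψ
      (ball x R ∩ {y : EuclideanSpace ℝ (Fin n) | 0 < y ⟨n - 1, by omega⟩}) volume) :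
    ⨍ y in ball x R, |Ψ y - ⨍ z in ball x R, Ψ z|
      ≤ 4 * ⨍ y in ball x R ∩ {y : EuclideanSpace ℝ (Fin n) | 0 < y ⟨n - 1, by omega⟩},
          |ψ y - ⨍ z in ball x R ∩ {z : EuclideanSpace ℝ (Fin n) | 0 < z ⟨n - 1, by omega⟩}, ψ z| := by
  set i : Fin n := ⟨n - 1, by omega⟩
  set c := ⨍ z in ball x R ∩ {z : EuclideanSpace ℝ (Fin n) | 0 < z i}, ψ z
  obtain rfl : Ψ = evenReflection i ψ :=
    funext fun y => by rw [hΨ, evenReflection, coordReflection_apply]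
  have hrefl : ∀ y ∈ ball x R, y i < 0 → coordReflection i y ∈ ball x R :=
    fun _ hy hyi => coordReflection_mem_ball i hx.le hy hyi
  have hΨint : IntegrableOn (evenReflection i ψ) (ball x R) :=
    integrableOn_evenReflection measurableSet_ball hrefl hint
  have hψc : IntegrableOn (fun y => |ψ y - c|) (ball x R ∩ {y | 0 < y i}) :=
    (hint.sub (integrableOn_const (measure_inter_lt_top_of_left_ne_top
      measure_ball_lt_top.ne).ne)).abs
  have : IsFiniteMeasure (volume.restrict (ball x R)) :=
    isFiniteMeasure_restrict.mpr measure_ball_lt_top.ne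
  calc ⨍ y in ball x R, |evenReflection i ψ y - ⨍ z in ball x R, evenReflection i ψ z|
      ≤ 2 * ⨍ y in ball x R, |evenReflection i ψ y - c| := average_abs_sub_average_le hΨint c
    _ = 2 * ⨍ y in ball x R, evenReflection i (fun z => |ψ z - c|) y := by
        rw [evenReflection_comp i (fun t => |t - c|) ψ]
    _ ≤ 2 * (2 * ⨍ y in ball x R ∩ {y | 0 < y i}, |ψ y - c|) := by
        gcongr
        exact setAverage_evenReflection_le measurableSet_ball measure_ball_lt_top.ne hrefl hψc
          fun _ => abs_nonneg _
    _ = 4 * ⨍ y in ball x R ∩ {y | 0 < y i}, |ψ y - c| := by ring
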